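/- arXiv:2402.10289 — 3 statements merged into one kernel-verified Lean document; each statement's English description precedes it below -/
import Mathlib

section
/- Let G be a nonnegative real random variable such that for some constant C > 0, P(G <= u) <= C*u for all u > 0. Then for every a > 0, E[exp(-a * G^2)] <= (C/2) * sqrt(pi/a). -/
open MeasureTheory ProbabilityTheory Real

/-! Since `exp (-a x²) = ∫_{u > x} 2au exp (-au²) du` for `x ≥ 0`, exchanging expectation and
integral gives `E[exp (-a G²)] = ∫_{u > 0} 2au exp (-au²) P(G < u) du`. The margin condition
bounds this by `2aC ∫_{u > 0} u² exp (-au²) du = 2aC · √π / (4 a^{3/2})`. -/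

open Set Filter

theorem lintegral_setLIntegral_Ioi_eq_lintegral_measure_lt_mul {Ω : Type*} [MeasurableSpace Ω]
    (μ : Measure Ω) [SFinite μ] {G : Ω → ℝ} (hG : Measurable G) {φ : ℝ → ENNReal}
    (hφ : Measurable φ) :
    ∫⁻ ω, (∫⁻ u in Ioi (G ω), φ u) ∂μ = ∫⁻ u, μ {ω | G ω < u} * φ u := by
  have hlt : MeasurableSet {p : Ω × ℝ | G p.1 < p.2} :=
    measurableSet_lt (hG.comp measurable_fst) measurable_snd
  calc ∫⁻ ω, (∫⁻ u in Ioi (G ω), φ u) ∂μ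
      = ∫⁻ ω, (∫⁻ u, {p : Ω × ℝ | G p.1 < p.2}.indicator (φ ∘ Prod.snd) (ω, u)) ∂μ :=
        lintegral_congr fun ω => by rw [← lintegral_indicator measurableSet_Ioi]; rfl
    _ = ∫⁻ u, ∫⁻ ω, {ω | G ω < u}.indicator (fun _ => φ u) ω ∂μ :=
        lintegral_lintegral_swap ((hφ.comp measurable_snd).indicator hlt).aemeasurable
    _ = ∫⁻ u, μ {ω | G ω < u} * φ u := by
        refine lintegral_congr fun u => ?_
        rw [lintegral_indicator_const (measurableSet_lt hG measurable_const), mul_comm]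

theorem lintegral_Ioi_mul_exp_neg_mul_sq {a x : ℝ} (ha : 0 < a) (hx : 0 ≤ x) :
    ∫⁻ u in Ioi x, ENNReal.ofReal (2 * a * u * exp (-a * u ^ 2)) =
      ENNReal.ofReal (exp (-a * x ^ 2)) := by
  have hderiv (u : ℝ) (_ : u ∈ Ici x) :
      HasDerivAt (fun u => -exp (-a * u ^ 2)) (2 * a * u * exp (-a * u ^ 2)) u :=
    ((hasDerivAt_pow 2 u).const_mul (-a)).exp.fun_neg.congr_deriv (by push_cast; ring)
  have hnonneg : ∀ u ∈ Ioi x, 0 ≤ 2 * a * u * exp (-a * u ^ 2) := fun u hu => by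
    have : 0 < u := hx.trans_lt hu
    positivity
  have hlim : Tendsto (fun u => -exp (-a * u ^ 2)) atTop (nhds (-0)) :=
    (tendsto_exp_atBot.comp <|
      (tendsto_pow_atTop two_ne_zero).const_mul_atTop_of_neg (neg_neg_of_pos ha)).neg
  rw [← ofReal_integral_eq_lintegral_ofReal
      (integrableOn_Ioi_deriv_of_nonneg' hderiv hnonneg hlim)
      ((ae_restrict_iff' measurableSet_Ioi).mpr (ae_of_all _ hnonneg)),
    integral_Ioi_of_hasDerivAt_of_nonneg' hderiv hnonneg hlim, neg_zero, zero_sub, neg_neg]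

theorem lintegral_Ioi_sq_mul_exp_neg_mul_sq {a : ℝ} (ha : 0 < a) :
    ∫⁻ u in Ioi 0, ENNReal.ofReal (u ^ 2 * exp (-a * u ^ 2)) =
      ENNReal.ofReal (√(π / a) / (4 * a)) := by
  have hint := integrableOn_rpow_mul_exp_neg_mul_sq ha (by norm_num : (-1 : ℝ) < 2)
  have hmoment := integral_rpow_mul_exp_neg_mul_rpow two_pos (by norm_num : (-1 : ℝ) < 2) ha
  simp only [rpow_two] at hint hmoment
  -- the moment is `a^(-3/2) Γ(3/2) / 2`, and `Γ(3/2) = Γ(1/2) / 2 = √π / 2`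
  rw [← ofReal_integral_eq_lintegral_ofReal hint (ae_of_all _ fun u => by positivity), hmoment,
    show ((2 : ℝ) + 1) / 2 = 1 / 2 + 1 by norm_num, Gamma_add_one (by norm_num),
    Gamma_one_half_eq, show (-(2 + 1) / 2 : ℝ) = -1 - 1 / 2 by norm_num, rpow_sub ha, rpow_neg_one,
    ← sqrt_eq_rpow, sqrt_div' _ ha.le]
  congr 1
  field_simp
  norm_num

theorem lintegral_exp_neg_mul_sq_eq_setLIntegral_measure_lt_mul {Ω : Type*} [MeasurableSpace Ω]
    (μ : Measure Ω) [SFinite μ] {G : Ω → ℝ} (hG : Measurable G)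
    (hG_nonneg : ∀ ω, 0 ≤ G ω) {a : ℝ} (ha : 0 < a) :
    ∫⁻ ω, ENNReal.ofReal (exp (-a * G ω ^ 2)) ∂μ =
      ∫⁻ u in Ioi 0, μ {ω | G ω < u} * ENNReal.ofReal (2 * a * u * exp (-a * u ^ 2)) := by
  have hdensity_eq_zero :
      ∀ u ∉ Ioi (0 : ℝ), ENNReal.ofReal (2 * a * u * exp (-a * u ^ 2)) = 0 :=
    fun u hu => ENNReal.ofReal_eq_zero.mpr <| mul_nonpos_of_nonpos_of_nonneg
      (mul_nonpos_of_nonneg_of_nonpos (by positivity) (not_lt.mp hu)) (exp_pos _).le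
  rw [setLIntegral_eq_of_support_subset (Function.support_subset_iff'.mpr fun u hu => by
      simp only [hdensity_eq_zero u hu, mul_zero]),
    ← lintegral_setLIntegral_Ioi_eq_lintegral_measure_lt_mul μ hG (by fun_prop)]
  simp_rw [lintegral_Ioi_mul_exp_neg_mul_sq ha (hG_nonneg _)]

/-- **Gaussian-type integral under a margin condition.**
If `G ≥ 0` satisfies the small-ball bound `P(G ≤ u) ≤ C u` for all `u > 0`, then for every
`a > 0`, `E[exp (-a G²)] ≤ (C/2) √(π/a)`. -/
theorem margin_exp_neg_sq_bound
    {Ω : Type*} {m0 : MeasurableSpace Ω} (P : Measure Ω) [IsProbabilityMeasure P]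
    (G : Ω → ℝ) (hG_meas : Measurable G) (hG_nonneg : ∀ ω, 0 ≤ G ω)
    (C : ℝ) (hC : 0 < C)
    (hmargin : ∀ u : ℝ, 0 < u → P {ω | G ω ≤ u} ≤ ENNReal.ofReal (C * u))
    (a : ℝ) (ha : 0 < a) :
    ∫ ω, Real.exp (-a * G ω ^ 2) ∂P ≤ C / 2 * Real.sqrt (π / a) := by
  have hbound : ∀ u ∈ Ioi (0 : ℝ),
      P {ω | G ω < u} * ENNReal.ofReal (2 * a * u * exp (-a * u ^ 2)) ≤
        ENNReal.ofReal (2 * a * C) * ENNReal.ofReal (u ^ 2 * exp (-a * u ^ 2)) := fun u hu => by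
    calc P {ω | G ω < u} * ENNReal.ofReal (2 * a * u * exp (-a * u ^ 2))
        ≤ ENNReal.ofReal (C * u) * ENNReal.ofReal (2 * a * u * exp (-a * u ^ 2)) := by
          gcongr
          exact (measure_mono fun ω (h : G ω < u) => h.le).trans (hmargin u hu)
      _ = _ := by
          rw [← ENNReal.ofReal_mul (mul_pos hC hu).le, ← ENNReal.ofReal_mul (by positivity)]
          congr 1
          ring
  have hlint :
      ∫⁻ ω, ENNReal.ofReal (exp (-a * G ω ^ 2)) ∂P ≤ ENNReal.ofReal (C / 2 * √(π / a)) :=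
    calc ∫⁻ ω, ENNReal.ofReal (exp (-a * G ω ^ 2)) ∂P
        = ∫⁻ u in Ioi 0, P {ω | G ω < u} * ENNReal.ofReal (2 * a * u * exp (-a * u ^ 2)) :=
          lintegral_exp_neg_mul_sq_eq_setLIntegral_measure_lt_mul P hG_meas hG_nonneg ha
      _ ≤ ∫⁻ u in Ioi 0,
            ENNReal.ofReal (2 * a * C) * ENNReal.ofReal (u ^ 2 * exp (-a * u ^ 2)) :=
          setLIntegral_mono (by fun_prop) hbound
      _ = ENNReal.ofReal (C / 2 * √(π / a)) := by
          rw [lintegral_const_mul _ (by fun_prop), lintegral_Ioi_sq_mul_exp_neg_mul_sq ha,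
            ← ENNReal.ofReal_mul (by positivity)]
          congr 1
          field_simp
          ring
  rw [integral_eq_lintegral_of_nonneg_ae (ae_of_all _ fun ω => (exp_pos _).le) (by fun_prop)]
  exact ENNReal.toReal_le_of_le_ofReal (by positivity) hlint
end

section
/- Let (F_t)_{t >= 0} be a filtration on a probability space and (A_t)_{t >= 1} events with A_t in F_t for each t. Let m and T be integers with 2 <= m <= T and let delta in (0,1). Then with probability at least 1 - delta: sum_{t=m}^{T} t^{-1/2} * 1_{A_t} <= sqrt(4 * log(T) * log(1/delta)) + sum_{t=m}^{T} t^{-1/2} * P(A_t | F_{t-1}), where P(A_t | F_{t-1}) = E[1_{A_t} | F_{t-1}]. -/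
open MeasureTheory ProbabilityTheory Real
open scoped NNReal

/-! With `D t = 1_{A t} - P[1_{A t} | F (t - 1)]`, the sums `∑ t⁻¹ᐟ² D t` form a martingale
whose increments are bounded by `t⁻¹ᐟ²`. By the conditional Hoeffding lemma each increment is
conditionally sub-Gaussian, so the sum is sub-Gaussian with variance proxy
`∑_{t=m}^T 1/t ≤ log T`, and the Chernoff bound `exp (-ε ^ 2 / (2 ∑ 1/t))` is at most `δ`
for `ε = √(4 log T log (1/δ))`. -/

theorem exp_mul_le_cosh_add_sinh_mul {x : ℝ} (hx : |x| ≤ 1) (r : ℝ) :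
    exp (r * x) ≤ cosh r + sinh r * x := by
  obtain ⟨hx₁, hx₂⟩ := abs_le.1 hx
  have h := convexOn_exp.2 (Set.mem_univ (-r)) (Set.mem_univ r)
    (by linarith : 0 ≤ (1 - x) / 2) (by linarith : 0 ≤ (1 + x) / 2) (by ring)
  simp only [smul_eq_mul] at h
  calc exp (r * x) = exp ((1 - x) / 2 * -r + (1 + x) / 2 * r) := by ring_nf
    _ ≤ _ := h
    _ = cosh r + sinh r * x := by rw [cosh_eq, sinh_eq]; ring

section
variable {Ω : Type*} {m m0 : MeasurableSpace Ω} {P : Measure Ω}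

-- Conditional Hoeffding lemma: `exp (r * D)` lies below the chord `cosh r + sinh r * D`,
-- whose conditional expectation is `cosh r ≤ exp (r ^ 2 / 2)`.
theorem condExp_exp_mul_le_of_abs_le_one [IsFiniteMeasure P] (hm : m ≤ m0) {D : Ω → ℝ}
    (hDi : Integrable D P) (hD : ∀ᵐ ω ∂P, |D ω| ≤ 1) (hcond : P[D | m] =ᵐ[P] 0) (r : ℝ) :
    P[fun ω => exp (r * D ω) | m] ≤ᵐ[P] fun _ => exp (r ^ 2 / 2) := by
  have hexp : Integrable (fun ω => exp (r * D ω)) P :=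
    integrable_exp_mul_of_mem_Icc hDi.aemeasurable (hD.mono fun _ h => abs_le.1 h)
  have hlin : P[fun ω => cosh r + sinh r * D ω | m] =ᵐ[P] fun _ => cosh r := by
    change P[(fun _ => cosh r) + sinh r • D | m] =ᵐ[P] _
    filter_upwards [condExp_add (integrable_const (cosh r)) (hDi.smul (sinh r)) m,
      condExp_smul (μ := P) (sinh r) D m, hcond] with ω hadd hsmul hzero
    simp [hadd, hsmul, hzero, condExp_const hm]
  filter_upwards [condExp_mono hexp ((integrable_const _).add (hDi.const_mul _))
    (hD.mono fun ω h => exp_mul_le_cosh_add_sinh_mul h r), hlin] with ω hmono hcosh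
  exact hmono.trans (hcosh.trans_le (cosh_le_exp_half_sq r))

theorem integral_mul_le_of_condExp_le [IsFiniteMeasure P] (hm : m ≤ m0) {f g : Ω → ℝ} {C : ℝ}
    (hf : StronglyMeasurable[m] f) (hf0 : 0 ≤ f) (hfi : Integrable f P) (hg : Integrable g P)
    (hfg : Integrable (f * g) P) (hgC : P[g | m] ≤ᵐ[P] fun _ => C) :
    ∫ ω, f ω * g ω ∂P ≤ C * ∫ ω, f ω ∂P := by
  have hpull := condExp_mul_of_stronglyMeasurable_left hf hfg hg
  calc ∫ ω, f ω * g ω ∂P = ∫ ω, (P[f * g | m]) ω ∂P := (integral_condExp hm).symm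
    _ = ∫ ω, f ω * (P[g | m]) ω ∂P := integral_congr_ae hpull
    _ ≤ ∫ ω, f ω * C ∂P := by
      refine integral_mono_ae (integrable_condExp.congr hpull) (hfi.mul_const C) ?_
      filter_upwards [hgC] with ω h
      exact mul_le_mul_of_nonneg_left h (hf0 ω)
    _ = C * ∫ ω, f ω ∂P := by rw [integral_mul_const, mul_comm]

theorem ProbabilityTheory.HasSubgaussianMGF.add_mul_of_condExp_eq_zero [IsFiniteMeasure P]
    (hm : m ≤ m0) {X D : Ω → ℝ} {cX : ℝ≥0} (hX : HasSubgaussianMGF X cX P)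
    (hXm : StronglyMeasurable[m] X) (hDi : Integrable D P) (hD : ∀ᵐ ω ∂P, |D ω| ≤ 1)
    (hcond : P[D | m] =ᵐ[P] 0) (a : ℝ) :
    HasSubgaussianMGF (fun ω => X ω + a * D ω) (cX + ‖a‖₊ ^ 2) P := by
  have hsplit (t : ℝ) : (fun ω => exp (t * (X ω + a * D ω))) =
      (fun ω => exp (t * X ω)) * fun ω => exp ((t * a) * D ω) := by
    ext ω; rw [Pi.mul_apply, ← exp_add]; ring_nf
  have hint (t : ℝ) : Integrable (fun ω => exp (t * (X ω + a * D ω))) P := by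
    rw [hsplit]
    refine (hX.integrable_exp_mul t).mul_bdd
      (continuous_exp.comp_aestronglyMeasurable (hDi.1.const_mul _)) (c := exp |t * a|) ?_
    filter_upwards [hD] with ω h
    rw [norm_eq_abs, abs_exp, exp_le_exp]
    calc t * a * D ω ≤ |t * a| * |D ω| := (le_abs_self _).trans (abs_mul _ _).le
      _ ≤ |t * a| := mul_le_of_le_one_right (abs_nonneg _) h
  refine ⟨hint, fun t => ?_⟩
  calc mgf (fun ω => X ω + a * D ω) P t
      = ∫ ω, exp (t * X ω) * exp ((t * a) * D ω) ∂P := by rw [mgf, hsplit]; rfl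
    _ ≤ exp ((t * a) ^ 2 / 2) * mgf X P t :=
      integral_mul_le_of_condExp_le hm (continuous_exp.comp_stronglyMeasurable (hXm.const_mul t))
        (fun ω => (exp_pos _).le) (hX.integrable_exp_mul t)
        (integrable_exp_mul_of_mem_Icc hDi.aemeasurable (hD.mono fun _ h => abs_le.1 h))
        (hsplit t ▸ hint t) (condExp_exp_mul_le_of_abs_le_one hm hDi hD hcond (t * a))
    _ ≤ exp ((t * a) ^ 2 / 2) * exp (cX * t ^ 2 / 2) := by gcongr; exact hX.mgf_le t
    _ = exp (↑(cX + ‖a‖₊ ^ 2) * t ^ 2 / 2) := by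
      rw [← exp_add]; push_cast; rw [norm_eq_abs, sq_abs]; ring_nf

theorem ae_abs_sub_condExp_le_one [IsFiniteMeasure P] (hm : m ≤ m0) {f : Ω → ℝ}
    (hf : Integrable f P) (hf01 : ∀ᵐ ω ∂P, f ω ∈ Set.Icc 0 1) :
    ∀ᵐ ω ∂P, |f ω - (P[f | m]) ω| ≤ 1 := by
  have hnonneg := condExp_nonneg (m := m) (hf01.mono fun _ h => h.1)
  have hle := condExp_mono (m := m) hf (integrable_const (1 : ℝ)) (hf01.mono fun _ h => h.2)
  rw [condExp_const hm] at hle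
  filter_upwards [hf01, hnonneg, hle] with ω h h0 h1
  simp only [Pi.zero_apply] at h0
  rw [abs_le]
  constructor <;> linarith [h.1, h.2]

theorem condExp_sub_condExp_ae_eq_zero [IsFiniteMeasure P] (hm : m ≤ m0) {f : Ω → ℝ}
    (hf : Integrable f P) : P[f - P[f | m] | m] =ᵐ[P] 0 := by
  filter_upwards [condExp_sub hf integrable_condExp m] with ω h
  rw [h, condExp_of_stronglyMeasurable hm stronglyMeasurable_condExp integrable_condExp]
  simp

-- Azuma's inequality in sub-Gaussian form; unlike `measure_sum_ge_le_of_hasCondSubgaussianMGF`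
-- it needs no standard Borel structure on `Ω`. The bound `1 ≤ k` keeps `t - 1` from truncating.
theorem hasSubgaussianMGF_sum_Icc_mul [IsProbabilityMeasure P] {F : Filtration ℕ m0}
    {D : ℕ → Ω → ℝ} (hDa : StronglyAdapted F D) (hDi : ∀ t, Integrable (D t) P)
    (hD : ∀ t, ∀ᵐ ω ∂P, |D t ω| ≤ 1) (hcond : ∀ t, P[D t | F (t - 1)] =ᵐ[P] 0)
    (c : ℕ → ℝ) {k : ℕ} (hk : 1 ≤ k) (n : ℕ) :
    HasSubgaussianMGF (fun ω => ∑ t ∈ Finset.Icc k n, c t * D t ω)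
      (∑ t ∈ Finset.Icc k n, ‖c t‖₊ ^ 2) P := by
  induction n with
  | zero => simp [Finset.Icc_eq_empty_of_lt (by omega : 0 < k)]
  | succ n ih =>
    rcases le_or_gt k (n + 1) with h | h
    · simp_rw [Finset.sum_Icc_succ_top h]
      refine ih.add_mul_of_condExp_eq_zero (F.le n) ?_ (hDi _) (hD _) (hcond (n + 1)) (c (n + 1))
      exact Finset.stronglyMeasurable_fun_sum _ fun t ht =>
        ((hDa t).mono (F.mono (Finset.mem_Icc.1 ht).2)).const_mul (c t)
    · simp [Finset.Icc_eq_empty_of_lt h]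

theorem hasSubgaussianMGF_sum_Icc_mul_indicator_sub_condExp [IsProbabilityMeasure P]
    (F : Filtration ℕ m0) {A : ℕ → Set Ω} (hA : ∀ t, MeasurableSet[F t] (A t)) (c : ℕ → ℝ)
    {k : ℕ} (hk : 1 ≤ k) (n : ℕ) :
    HasSubgaussianMGF (fun ω => ∑ t ∈ Finset.Icc k n, c t * ((A t).indicator (fun _ => 1) ω -
        (P[(A t).indicator fun _ => 1 | F (t - 1)]) ω))
      (∑ t ∈ Finset.Icc k n, ‖c t‖₊ ^ 2) P := by
  have hint (t : ℕ) : Integrable ((A t).indicator fun _ => (1 : ℝ)) P :=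
    (integrable_const 1).indicator (F.le t _ (hA t))
  refine hasSubgaussianMGF_sum_Icc_mul (fun t => ?_) (fun t => (hint t).sub integrable_condExp)
    (fun t => ae_abs_sub_condExp_le_one (F.le _) (hint t) (ae_of_all _ fun ω => ?_))
    (fun t => condExp_sub_condExp_ae_eq_zero (F.le _) (hint t)) c hk n
  · exact (stronglyMeasurable_const.indicator (hA t)).sub
      (stronglyMeasurable_condExp.mono (F.mono (Nat.sub_le t 1)))
  · by_cases h : ω ∈ A t <;> simp [h]

theorem ofReal_one_sub_le_of_measureReal_compl_le [IsProbabilityMeasure P] {s : Set Ω} {δ : ℝ}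
    (hδ : 0 ≤ δ) (h : P.real sᶜ ≤ δ) : ENNReal.ofReal (1 - δ) ≤ P s := by
  have hc : P sᶜ ≤ ENNReal.ofReal δ :=
    (ENNReal.le_ofReal_iff_toReal_le (measure_ne_top P _) hδ).2 h
  rw [ENNReal.ofReal_sub _ hδ, ENNReal.ofReal_one, tsub_le_iff_right]
  calc 1 = P (s ∪ sᶜ) := by rw [Set.union_compl_self, measure_univ]
    _ ≤ P s + P sᶜ := measure_union_le _ _
    _ ≤ P s + ENNReal.ofReal δ := by gcongr

end

-- `m ≥ 2` drops the term `1/1` of the harmonic sum, which pays for the `1` in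
-- `H_T ≤ 1 + log T`.
theorem sum_Icc_inv_le_log {m : ℕ} (hm : 2 ≤ m) (T : ℕ) :
    ∑ t ∈ Finset.Icc m T, (t : ℝ)⁻¹ ≤ log T := by
  rcases Nat.eq_zero_or_pos T with rfl | hT
  · simp [Finset.Icc_eq_empty_of_lt (by omega : 0 < m)]
  have hsub : insert 1 (Finset.Icc m T) ⊆ Finset.Icc 1 T := by
    intro t ht
    simp only [Finset.mem_insert, Finset.mem_Icc] at ht ⊢
    omega
  have h := Finset.sum_le_sum_of_subset_of_nonneg hsub
    (f := fun t : ℕ => (t : ℝ)⁻¹) (fun t _ _ => by positivity)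
  rw [Finset.sum_insert (by simp; omega)] at h
  have := harmonic_le_one_add_log T
  rw [harmonic_eq_sum_Icc] at this
  push_cast at this h
  linarith

theorem exp_neg_sq_sqrt_div_le {V L δ : ℝ} (hV : 0 < V) (hVL : V ≤ 2 * L) (hδ0 : 0 < δ)
    (hδ1 : δ ≤ 1) : exp (-√(4 * L * log (1 / δ)) ^ 2 / (2 * V)) ≤ δ := by
  have hlog : 0 ≤ log (1 / δ) := log_nonneg (by rw [le_div_iff₀ hδ0]; linarith)
  rw [sq_sqrt (by nlinarith)]
  calc exp (-(4 * L * log (1 / δ)) / (2 * V)) ≤ exp (-log (1 / δ)) := by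
        rw [exp_le_exp, div_le_iff₀ (by positivity)]
        nlinarith
    _ = δ := by rw [one_div, log_inv, neg_neg, exp_log hδ0]

/-- **Azuma bound for weighted indicator sums.**
For adapted events `A t ∈ F t` and `2 ≤ m ≤ T`, with probability at least `1 - δ`,
`∑_{t=m}^T t^{-1/2} 1_{A t} ≤ √(4 log T log (1/δ)) + ∑_{t=m}^T t^{-1/2} P(A t | F (t-1))`. -/
theorem azuma_weighted_indicator_sum
    {Ω : Type*} {m0 : MeasurableSpace Ω} {P : Measure Ω} [IsProbabilityMeasure P]
    (F : Filtration ℕ m0) (A : ℕ → Set Ω) (hA : ∀ t, MeasurableSet[F t] (A t))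
    (m T : ℕ) (hm : 2 ≤ m) (hmT : m ≤ T)
    (δ : ℝ) (hδ0 : 0 < δ) (hδ1 : δ < 1) :
    ENNReal.ofReal (1 - δ) ≤
      P {ω | ∑ t ∈ Finset.Icc m T, (Real.sqrt t)⁻¹ * (A t).indicator (fun _ => (1 : ℝ)) ω ≤
          Real.sqrt (4 * Real.log T * Real.log (1 / δ)) +
            ∑ t ∈ Finset.Icc m T,
              (Real.sqrt t)⁻¹ * (P[(A t).indicator fun _ => (1 : ℝ) | F (t - 1)]) ω} := by
  have hS := hasSubgaussianMGF_sum_Icc_mul_indicator_sub_condExp (P := P) F hA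
    (fun t => (√t)⁻¹) (k := m) (by omega) T
  have hV : ((∑ t ∈ Finset.Icc m T, ‖(√(t : ℝ))⁻¹‖₊ ^ 2 : ℝ≥0) : ℝ) =
      ∑ t ∈ Finset.Icc m T, (t : ℝ)⁻¹ := by
    push_cast
    simp [sq_abs, inv_pow, sq_sqrt]
  have hVpos : 0 < ∑ t ∈ Finset.Icc m T, (t : ℝ)⁻¹ :=
    Finset.sum_pos (fun t ht => inv_pos.2 (Nat.cast_pos.2 (by grind))) ⟨m, by simp [hmT]⟩
  have htail := hS.measure_ge_le (sqrt_nonneg (4 * log T * log (1 / δ)))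
  rw [hV] at htail
  have hδ := exp_neg_sq_sqrt_div_le (L := log T) hVpos
    (by linarith [sum_Icc_inv_le_log hm T]) hδ0 hδ1.le
  refine ofReal_one_sub_le_of_measureReal_compl_le hδ0.le
    ((measureReal_mono ?_).trans (htail.trans hδ))
  intro ω hω
  simp only [Set.mem_compl_iff, Set.mem_ofPred_eq, not_le, mul_sub,
    Finset.sum_sub_distrib] at hω ⊢
  linarith
end

section
/- Let (Omega, F, P) be a probability space, G a sub-sigma-algebra of F, and xi_1, ..., xi_N real random variables that are conditionally independent given G. Let theta be a G-measurable real random variable, and let a be a random variable taking values in {1,...,N} such that xi_a = max_{1 <= k <= N} xi_k almost surely. Fix distinct indices i and j and set p = P(xi_i > theta | G). Then, almost surely on the event {p > 0}: P( a = j and xi_k <= theta for all k | G ) <= ((1 - p)/p) * P( a = i | G ). -/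
open MeasureTheory ProbabilityTheory Real
open Filter Topology


private lemma exists_rat_seq (c : ℝ) : ∃ Q : ℕ → ℚ, Antitone Q ∧ (∀ n, c < (Q n : ℝ)) ∧
    Tendsto (fun n => (Q n : ℝ)) atTop (𝓝 c) := by
  have h : ∀ n : ℕ, ∃ q : ℚ, c < (q : ℝ) ∧ (q : ℝ) < c + 1 / (n + 1) := fun n =>
    exists_rat_btwn (lt_add_of_pos_right c (by positivity))
  choose q hq1 hq2 using h
  refine ⟨fun n => (Finset.range (n + 1)).inf' Finset.nonempty_range_add_one q, ?_, ?_, ?_⟩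
  · intro n m hnm
    refine Finset.le_inf' _ _ fun b hb => Finset.inf'_le _ ?_
    exact Finset.mem_range.2 (lt_of_lt_of_le (Finset.mem_range.1 hb) (by omega))
  · intro n
    obtain ⟨b, hb, hEq⟩ := Finset.exists_mem_eq_inf'
      (Finset.nonempty_range_add_one : (Finset.range (n + 1)).Nonempty) q
    show c < (((Finset.range (n + 1)).inf' Finset.nonempty_range_add_one q : ℚ) : ℝ)
    rw [hEq]; exact hq1 b
  · have hub : ∀ n : ℕ, (((Finset.range (n + 1)).inf' Finset.nonempty_range_add_one q : ℚ) : ℝ) ≤ c + 1 / (n + 1) := by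
      intro n
      have h1 : (Finset.range (n + 1)).inf' Finset.nonempty_range_add_one q ≤ q n :=
        Finset.inf'_le _ (Finset.mem_range.2 (by omega))
      exact le_trans (by exact_mod_cast h1) (hq2 n).le
    have hlb : ∀ n : ℕ, c ≤ (((Finset.range (n + 1)).inf' Finset.nonempty_range_add_one q : ℚ) : ℝ) := by
      intro n
      obtain ⟨b, hb, hEq⟩ := Finset.exists_mem_eq_inf' (Finset.nonempty_range_add_one : (Finset.range (n+1)).Nonempty) q
      rw [hEq]; exact (hq1 b).le
    have hc : Tendsto (fun n : ℕ => c + 1 / ((n : ℝ) + 1)) atTop (𝓝 (c + 0)) :=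
      tendsto_const_nhds.add tendsto_one_div_add_atTop_nhds_zero_nat
    rw [add_zero] at hc
    exact tendsto_of_tendsto_of_tendsto_of_le_of_le tendsto_const_nhds hc hlb hub

private lemma tendsto_meas_le {Ω : Type*} {m0 : MeasurableSpace Ω} (μ : Measure Ω)
    [IsFiniteMeasure μ] {g : Ω → ℝ} (hg : Measurable g) {c : ℝ} {Q : ℕ → ℚ}
    (hanti : Antitone Q) (hgt : ∀ n, c < (Q n : ℝ))
    (hlim : Tendsto (fun n => (Q n : ℝ)) atTop (𝓝 c)) :
    Tendsto (fun n => μ {ω | g ω ≤ (Q n : ℝ)}) atTop (𝓝 (μ {ω | g ω ≤ c})) := by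
  have hm : ∀ n, NullMeasurableSet {ω | g ω ≤ (Q n : ℝ)} μ :=
    fun n => (measurableSet_le hg measurable_const).nullMeasurableSet
  have hA : Antitone fun n => {ω | g ω ≤ (Q n : ℝ)} := by
    intro n m hnm ω hω
    have hω' : g ω ≤ (Q m : ℝ) := hω
    exact le_trans hω' (by exact_mod_cast hanti hnm)
  have h := tendsto_measure_iInter_atTop hm hA ⟨0, measure_ne_top _ _⟩
  have hEq : ⋂ n, {ω | g ω ≤ (Q n : ℝ)} = {ω | g ω ≤ c} := by
    ext ω; simp only [Set.mem_iInter, Set.mem_setOf_eq]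
    exact ⟨fun h' => ge_of_tendsto' hlim h', fun h' n => h'.trans (hgt n).le⟩
  rwa [hEq] at h

private lemma meas_argmax_comp {Ω : Type*} {m0 : MeasurableSpace Ω} {N : ℕ}
    (xi : Fin N → Ω → ℝ) (hxi : ∀ k, Measurable (xi k)) (a : Ω → Fin N)
    (ha : Measurable a) : Measurable fun ω => xi (a ω) ω := by
  have h1 : Measurable fun p : Ω × Fin N => xi p.2 p.1 :=
    measurable_from_prod_countable_left fun k => hxi k
  exact h1.comp (measurable_id.prodMk ha)

private lemma pointwise_argmax_bound {Ω : Type*} {m0 : MeasurableSpace Ω}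
    (μ : Measure Ω) [IsProbabilityMeasure μ]
    {N : ℕ} (xi : Fin N → Ω → ℝ) (hxi : ∀ k, Measurable (xi k))
    (theta : Ω → ℝ) (htheta : Measurable theta)
    (a : Ω → Fin N) (ha_meas : Measurable a)
    (c : ℝ)
    (hθq : ∀ q : ℚ, μ {ω | theta ω ≤ (q : ℝ)} = if c ≤ (q : ℝ) then 1 else 0)
    (hmax : μ {ω | ∀ k, xi k ω ≤ xi (a ω) ω}ᶜ = 0)
    (hind : ∀ (S : Finset (Fin N)) (q : ℚ),
      μ (⋂ k ∈ S, {ω | xi k ω ≤ (q : ℝ)}) = ∏ k ∈ S, μ {ω | xi k ω ≤ (q : ℝ)})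
    (i j : Fin N) (hij : i ≠ j)
    (hp : 0 < (μ {ω | theta ω < xi i ω}).toReal) :
    (μ {ω | a ω = j ∧ ∀ k, xi k ω ≤ theta ω}).toReal ≤
      ((1 - (μ {ω | theta ω < xi i ω}).toReal) / (μ {ω | theta ω < xi i ω}).toReal) *
        (μ {ω | a ω = i}).toReal := by
  obtain ⟨Q, hQanti, hQgt, hQlim⟩ := exists_rat_seq c
  -- θ = c almost surely under μ
  have hθle : μ {ω | theta ω ≤ c} = 1 := by
    have h1 := tendsto_meas_le μ htheta hQanti hQgt hQlim
    have h2 : ∀ n, μ {ω | theta ω ≤ (Q n : ℝ)} = 1 := fun n => by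
      rw [hθq (Q n), if_pos (hQgt n).le]
    simp only [h2] at h1
    exact tendsto_nhds_unique h1 tendsto_const_nhds
  have hθlt : μ {ω | theta ω < c} = 0 := by
    have hsub : {ω | theta ω < c} ⊆ ⋃ q ∈ {q : ℚ | (q : ℝ) < c}, {ω | theta ω ≤ (q : ℝ)} := by
      intro ω hω
      obtain ⟨q, hq1, hq2⟩ := exists_rat_btwn (show theta ω < c from hω)
      exact Set.mem_biUnion hq2 hq1.le
    refine measure_mono_null hsub ?_
    refine (measure_biUnion_null_iff (Set.to_countable _)).2 fun q hq => ?_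
    rw [hθq q, if_neg (not_le.2 hq)]
  have hTnull : μ {ω | theta ω = c}ᶜ = 0 := by
    have hsub : {ω | theta ω = c}ᶜ ⊆ {ω | theta ω < c} ∪ {ω | theta ω ≤ c}ᶜ := by
      intro ω hω
      rcases lt_or_gt_of_ne (hω : theta ω ≠ c) with h | h
      · exact Or.inl h
      · exact Or.inr (not_le.2 h)
    have hcle : μ {ω | theta ω ≤ c}ᶜ = 0 := by
      rw [measure_compl (measurableSet_le htheta measurable_const) (measure_ne_top _ _),
        hθle, measure_univ, tsub_self]
    exact measure_mono_null hsub (measure_union_null hθlt hcle)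
  -- independence at level c
  have hind_c : ∀ S : Finset (Fin N),
      μ (⋂ k ∈ S, {ω | xi k ω ≤ c}) = ∏ k ∈ S, μ {ω | xi k ω ≤ c} := by
    intro S
    have hmeas : ∀ n : ℕ, NullMeasurableSet (⋂ k ∈ S, {ω | xi k ω ≤ (Q n : ℝ)}) μ := fun n =>
      (MeasurableSet.biInter S.countable_toSet fun k _ =>
        measurableSet_le (hxi k) measurable_const).nullMeasurableSet
    have hanti : Antitone fun n => ⋂ k ∈ S, {ω | xi k ω ≤ (Q n : ℝ)} := by
      intro n m hnm
      refine Set.iInter₂_mono fun k hk ω hω => ?_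
      have hω' : xi k ω ≤ (Q m : ℝ) := hω
      exact le_trans hω' (by exact_mod_cast hQanti hnm)
    have hlim1 := tendsto_measure_iInter_atTop hmeas hanti ⟨0, measure_ne_top _ _⟩
    have hiEq : ⋂ n, ⋂ k ∈ S, {ω | xi k ω ≤ (Q n : ℝ)} = ⋂ k ∈ S, {ω | xi k ω ≤ c} := by
      ext ω
      simp only [Set.mem_iInter, Set.mem_setOf_eq]
      constructor
      · intro h k hk
        exact ge_of_tendsto' hQlim fun n => h n k hk
      · intro h n k hk
        exact (h k hk).trans (hQgt n).le
    rw [hiEq] at hlim1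
    have hlim2 : Tendsto (fun n => ∏ k ∈ S, μ {ω | xi k ω ≤ (Q n : ℝ)}) atTop
        (𝓝 (∏ k ∈ S, μ {ω | xi k ω ≤ c})) :=
      ENNReal.tendsto_finset_prod_of_ne_top S
        (fun k _ => tendsto_meas_le μ (hxi k) hQanti hQgt hQlim)
        (fun k _ => measure_ne_top _ _)
    have h3 : (⇑μ ∘ fun n => ⋂ k ∈ S, {ω | xi k ω ≤ (Q n : ℝ)})
        = fun n => ∏ k ∈ S, μ {ω | xi k ω ≤ (Q n : ℝ)} := by
      funext n; exact hind S (Q n)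
    rw [h3] at hlim1
    exact tendsto_nhds_unique hlim1 hlim2
  -- Main sets
  set C : Set Ω := {ω | xi i ω ≤ c} with hC
  set B : Set Ω := ⋂ k ∈ Finset.univ.erase i, {ω | xi k ω ≤ c} with hB
  have hCmeas : MeasurableSet C := measurableSet_le (hxi i) measurable_const
  have hBC : ⋂ k ∈ (Finset.univ : Finset (Fin N)), {ω | xi k ω ≤ c} = C ∩ B := by
    conv_lhs => rw [← Finset.insert_erase (Finset.mem_univ i)]
    rw [Finset.set_biInter_insert]
  have hμCB : μ (C ∩ B) = μ C * ∏ k ∈ Finset.univ.erase i, μ {ω | xi k ω ≤ c} := by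
    rw [← hBC, hind_c Finset.univ, ← Finset.mul_prod_erase _ _ (Finset.mem_univ i)]
  have hμB : μ B = ∏ k ∈ Finset.univ.erase i, μ {ω | xi k ω ≤ c} := hind_c _
  have hTM : μ ({ω | theta ω = c} ∩ {ω | ∀ k, xi k ω ≤ xi (a ω) ω})ᶜ = 0 := by
    rw [Set.compl_inter]
    exact measure_union_null hTnull hmax
  -- bound on the j-event
  have hs2 : μ {ω | a ω = j ∧ ∀ k, xi k ω ≤ theta ω} ≤ μ (C ∩ B) := by
    rw [← measure_inter_conull hTM]
    refine measure_mono ?_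
    rintro ω ⟨⟨-, hall⟩, ⟨hT, -⟩⟩
    have hc' : ∀ k, xi k ω ≤ c := fun k => by
      have := hall k; rwa [hT] at this
    exact ⟨hc' i, Set.mem_iInter₂.2 fun k _ => hc' k⟩
  -- bound on the i-event
  have hs3 : μ (B \ C) ≤ μ {ω | a ω = i} := by
    rw [← measure_inter_conull hTM]
    refine measure_mono ?_
    rintro ω ⟨⟨hBmem, hCnot⟩, ⟨-, hMmem⟩⟩
    have hgt : c < xi i ω := not_le.1 hCnot
    show a ω = i
    by_contra hne
    have hmem : a ω ∈ Finset.univ.erase i := Finset.mem_erase.2 ⟨hne, Finset.mem_univ _⟩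
    have h1 : xi (a ω) ω ≤ c := Set.mem_iInter₂.1 hBmem (a ω) hmem
    have h2 : xi i ω ≤ xi (a ω) ω := hMmem i
    exact absurd (h2.trans h1) (not_le.2 hgt)
  have hdiff : μ (B ∩ C) + μ (B \ C) = μ B := measure_inter_add_diff B hCmeas
  -- the probability p
  have hpC : μ {ω | theta ω < xi i ω} = μ Cᶜ := by
    rw [← measure_inter_conull hTM, ← measure_inter_conull (s := Cᶜ) hTM]
    congr 1
    ext ω
    simp only [Set.mem_inter_iff, Set.mem_setOf_eq, Set.mem_compl_iff, hC, not_le,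
      and_congr_left_iff]
    rintro ⟨hT, -⟩
    rw [hT]
  have hCadd : μ C + μ Cᶜ = 1 := by
    rw [measure_add_measure_compl hCmeas, measure_univ]
  -- pass to real numbers
  set p : ℝ := (μ {ω | theta ω < xi i ω}).toReal with hpdef
  set qi : ℝ := (μ C).toReal with hqidef
  set Pe : ℝ := (∏ k ∈ Finset.univ.erase i, μ {ω | xi k ω ≤ c}).toReal with hPedef
  have hPene : (∏ k ∈ Finset.univ.erase i, μ {ω | xi k ω ≤ c}) ≠ ⊤ := by
    rw [← hμB]; exact measure_ne_top _ _
  have hqip : qi + p = 1 := by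
    rw [hqidef, hpdef, hpC, ← ENNReal.toReal_add (measure_ne_top _ _) (measure_ne_top _ _), hCadd,
      ENNReal.toReal_one]
  have f1 : (μ {ω | a ω = j ∧ ∀ k, xi k ω ≤ theta ω}).toReal ≤ qi * Pe := by
    refine le_trans (ENNReal.toReal_mono (measure_ne_top _ _) hs2) ?_
    rw [hμCB, ENNReal.toReal_mul]
  have f2 : (μ (B \ C)).toReal ≤ (μ {ω | a ω = i}).toReal :=
    ENNReal.toReal_mono (measure_ne_top _ _) hs3
  have f3 : qi * Pe + (μ (B \ C)).toReal = Pe := by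
    have h0 := congrArg ENNReal.toReal hdiff
    rw [ENNReal.toReal_add (measure_ne_top _ _) (measure_ne_top _ _)] at h0
    rw [hqidef, hPedef, ← ENNReal.toReal_mul, ← hμCB, ← hμB, Set.inter_comm C B]
    exact h0
  have hPenn : 0 ≤ Pe := ENNReal.toReal_nonneg
  have hqinn : 0 ≤ qi := ENNReal.toReal_nonneg
  have hdReal : (μ (B \ C)).toReal = p * Pe := by
    have : qi = 1 - p := by linarith
    rw [this] at f3; nlinarith [f3]
  rw [div_mul_eq_mul_div, le_div_iff₀ hp]
  have h1p : 1 - p = qi := by linarith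
  rw [h1p]
  calc (μ {ω | a ω = j ∧ ∀ k, xi k ω ≤ theta ω}).toReal * p
      ≤ qi * Pe * p := mul_le_mul_of_nonneg_right f1 hp.le
    _ = qi * (p * Pe) := by ring
    _ ≤ qi * (μ {ω | a ω = i}).toReal := by
        refine mul_le_mul_of_nonneg_left ?_ hqinn
        rw [← hdReal]; exact f2

set_option maxHeartbeats 1000000

/-- **Conditional probability ratio for the argmax of conditionally independent scores
(the paper's Lemma 8).**
If `xi 1, ..., xi N` are conditionally independent given `G`, `theta` is `G`-measurable,
and `a` selects an index attaining the maximum of the `xi k`, then, almost surely on the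
event `{P(xi i > theta | G) > 0}`,
`P(a = j and xi k ≤ theta for all k | G) ≤ ((1 - p)/p) * P(a = i | G)`
where `p = P(xi i > theta | G)`. -/
theorem argmax_conditional_prob_ratio
    {Ω : Type*} (G : MeasurableSpace Ω) {m0 : MeasurableSpace Ω} [StandardBorelSpace Ω]
    (P : Measure Ω) [IsProbabilityMeasure P]
    (hG : G ≤ m0)
    (N : ℕ) (hN : 0 < N)
    (xi : Fin N → Ω → ℝ) (hxi_meas : ∀ k, Measurable (xi k))
    (hcondindep : iCondIndepFun G hG xi P)
    (theta : Ω → ℝ) (htheta : Measurable[G] theta)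
    (a : Ω → Fin N) (ha_meas : Measurable a)
    (ha : ∀ᵐ ω ∂P, ∀ k, xi k ω ≤ xi (a ω) ω)
    (i j : Fin N) (hij : i ≠ j) :
    ∀ᵐ ω ∂P,
      0 < (P[Set.indicator {ω' | theta ω' < xi i ω'} (fun _ => (1 : ℝ)) | G]) ω →
      (P[Set.indicator {ω' | a ω' = j ∧ ∀ k, xi k ω' ≤ theta ω'} (fun _ => (1 : ℝ)) | G]) ω ≤
        ((1 - (P[Set.indicator {ω' | theta ω' < xi i ω'} (fun _ => (1 : ℝ)) | G]) ω) /
            (P[Set.indicator {ω' | theta ω' < xi i ω'} (fun _ => (1 : ℝ)) | G]) ω) *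
          (P[Set.indicator {ω' | a ω' = i} (fun _ => (1 : ℝ)) | G]) ω := by
  classical
  have hθm : Measurable[m0] theta := htheta.mono hG le_rfl
  have hxiM : ∀ k, Measurable[m0] (xi k) := fun k => hxi_meas k
  have haM : Measurable[m0] a := ha_meas
  have hs1 : MeasurableSet[m0] {ω' | theta ω' < xi i ω'} := measurableSet_lt hθm (hxiM i)
  have haj : ∀ k : Fin N, MeasurableSet[m0] {ω' | a ω' = k} := fun k =>
    haM (measurableSet_singleton k)
  have hxa : Measurable[m0] fun ω' => xi (a ω') ω' := meas_argmax_comp xi hxiM a haM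
  have hs2 : MeasurableSet[m0] {ω' | a ω' = j ∧ ∀ k, xi k ω' ≤ theta ω'} := by
    have hEq : {ω' | a ω' = j ∧ ∀ k, xi k ω' ≤ theta ω'}
        = {ω' | a ω' = j} ∩ ⋂ k, {ω' | xi k ω' ≤ theta ω'} := by
      ext ω'; simp [Set.mem_iInter]
    rw [hEq]
    exact (haj j).inter (MeasurableSet.iInter fun k => measurableSet_le (hxiM k) hθm)
  have hMmeas : MeasurableSet[m0] {ω' | ∀ k, xi k ω' ≤ xi (a ω') ω'} := by
    have hEq : {ω' | ∀ k, xi k ω' ≤ xi (a ω') ω'}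
        = ⋂ k, {ω' | xi k ω' ≤ xi (a ω') ω'} := by
      ext ω'; simp [Set.mem_iInter]
    rw [hEq]
    exact MeasurableSet.iInter fun k => measurableSet_le (hxiM k) hxa
  -- conditional independence transferred to the kernel
  have hiff := (iCondIndepFun_iff_condExp_inter_preimage_eq_mul (m' := G) (hm' := hG)
      (fun _ => inferInstance) xi hxiM).1 hcondindep
  have h1 : ∀ᵐ ω ∂P, ∀ (S : Finset (Fin N)) (q : ℚ),
      condExpKernel (mΩ := m0) P G ω (⋂ k ∈ S, {ω' | xi k ω' ≤ (q : ℝ)})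
        = ∏ k ∈ S, condExpKernel (mΩ := m0) P G ω {ω' | xi k ω' ≤ (q : ℝ)} := by
    rw [ae_all_iff]
    intro S
    rw [ae_all_iff]
    intro q
    have hsets : ∀ k : Fin N, MeasurableSet[m0] {ω' | xi k ω' ≤ (q : ℝ)} := fun k =>
      measurableSet_le (hxiM k) measurable_const
    have hprod := hiff S (sets := fun _ => Set.Iic (q : ℝ)) (fun k _ => measurableSet_Iic)
    have hpre : ∀ k : Fin N, xi k ⁻¹' Set.Iic (q : ℝ) = {ω' | xi k ω' ≤ (q : ℝ)} :=
      fun k => rfl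
    simp only [hpre] at hprod
    have hA := condExpKernel_ae_eq_condExp (mΩ := m0) (μ := P) hG
      (S.measurableSet_biInter fun k _ => hsets k)
    have hB : ∀ᵐ ω ∂P, ∀ k : Fin N,
        (condExpKernel (mΩ := m0) P G ω {ω' | xi k ω' ≤ (q : ℝ)}).toReal
          = (P[Set.indicator {ω' | xi k ω' ≤ (q : ℝ)} (fun _ => (1 : ℝ)) | G]) ω := by
      rw [ae_all_iff]
      exact fun k => condExpKernel_ae_eq_condExp (mΩ := m0) (μ := P) hG (hsets k)
    filter_upwards [hprod, hA, hB] with ω hω hωA hωB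
    have hL : (condExpKernel (mΩ := m0) P G ω (⋂ k ∈ S, {ω' | xi k ω' ≤ (q : ℝ)})).toReal
        = (∏ k ∈ S, condExpKernel (mΩ := m0) P G ω {ω' | xi k ω' ≤ (q : ℝ)}).toReal := by
      rw [ENNReal.toReal_prod, ← measureReal_def, hωA, hω, Finset.prod_apply]
      exact Finset.prod_congr rfl fun k hk => (hωB k).symm
    have hne2 : (∏ k ∈ S, condExpKernel (mΩ := m0) P G ω {ω' | xi k ω' ≤ (q : ℝ)}) ≠ ⊤ :=
      ENNReal.prod_ne_top fun k _ => measure_ne_top _ _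
    exact (ENNReal.toReal_eq_toReal_iff' (measure_ne_top _ _) hne2).1 hL
  -- the conditional law of theta is a Dirac at theta ω
  have h2 : ∀ᵐ ω ∂P, ∀ q : ℚ,
      condExpKernel (mΩ := m0) P G ω {ω' | theta ω' ≤ (q : ℝ)}
        = if theta ω ≤ (q : ℝ) then 1 else 0 := by
    rw [ae_all_iff]
    intro q
    have htG : MeasurableSet[G] {ω' | theta ω' ≤ (q : ℝ)} :=
      measurableSet_le htheta measurable_const
    have ht0 : MeasurableSet[m0] {ω' | theta ω' ≤ (q : ℝ)} := hG _ htG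
    have hcond := condExpKernel_ae_eq_condExp (mΩ := m0) (μ := P) hG ht0
    have hce : P[Set.indicator {ω' | theta ω' ≤ (q : ℝ)} (fun _ => (1 : ℝ)) | G]
        = Set.indicator {ω' | theta ω' ≤ (q : ℝ)} (fun _ => (1 : ℝ)) :=
      condExp_of_stronglyMeasurable (μ := P) hG
        (stronglyMeasurable_const.indicator htG) (((integrable_const (1 : ℝ)).indicator ht0 : Integrable _ P))
    filter_upwards [hcond] with ω hω
    rw [hce] at hω
    by_cases hc : theta ω ≤ (q : ℝ)
    · rw [if_pos hc]
      rw [Set.indicator_of_mem (show ω ∈ {ω' | theta ω' ≤ (q : ℝ)} from hc)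
        (fun _ => (1 : ℝ))] at hω
      exact (ENNReal.toReal_eq_one_iff _).1 hω
    · rw [if_neg hc]
      rw [Set.indicator_of_notMem (show ω ∉ {ω' | theta ω' ≤ (q : ℝ)} from hc)
        (fun _ => (1 : ℝ))] at hω
      exact ((ENNReal.toReal_eq_zero_iff _).1 hω).resolve_right (measure_ne_top _ _)
  -- the argmax property holds under the kernel
  have h3 : ∀ᵐ ω ∂P, condExpKernel (mΩ := m0) P G ω {ω' | ∀ k, xi k ω' ≤ xi (a ω') ω'}ᶜ = 0 := by
    have hcond := condExpKernel_ae_eq_condExp (mΩ := m0) (μ := P) hG hMmeas.compl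
    have hzero : Set.indicator {ω' | ∀ k, xi k ω' ≤ xi (a ω') ω'}ᶜ (fun _ => (1 : ℝ))
        =ᵐ[P] (0 : Ω → ℝ) := by
      filter_upwards [ha] with ω hω
      exact Set.indicator_of_notMem (by simpa using hω) _
    have hce : P[Set.indicator {ω' | ∀ k, xi k ω' ≤ xi (a ω') ω'}ᶜ (fun _ => (1 : ℝ)) | G]
        =ᵐ[P] (0 : Ω → ℝ) := by
      calc P[Set.indicator {ω' | ∀ k, xi k ω' ≤ xi (a ω') ω'}ᶜ (fun _ => (1 : ℝ)) | G]
          =ᵐ[P] P[(0 : Ω → ℝ) | G] := condExp_congr_ae hzero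
        _ = 0 := condExp_zero
    filter_upwards [hcond, hce] with ω hω h0
    rw [h0] at hω
    exact ((ENNReal.toReal_eq_zero_iff _).1 hω).resolve_right (measure_ne_top _ _)
  have h4s1 := condExpKernel_ae_eq_condExp (mΩ := m0) (μ := P) hG hs1
  have h4s2 := condExpKernel_ae_eq_condExp (mΩ := m0) (μ := P) hG hs2
  have h4s3 := condExpKernel_ae_eq_condExp (mΩ := m0) (μ := P) hG (haj i)
  filter_upwards [h1, h2, h3, h4s1, h4s2, h4s3] with ω hω1 hω2 hω3 he1 he2 he3
  intro hp
  rw [← he1] at hp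
  rw [← he1, ← he2, ← he3]
  exact pointwise_argmax_bound (condExpKernel (mΩ := m0) P G ω) xi hxiM theta hθm a haM
    (theta ω) hω2 hω3 hω1 i j hij hp
end
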